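/- Fix n ≥ 1, β ≥ 1 and 1 ≤ k ≤ n, and a deterministic environment ω with ω_{k,y} ∈ (a,b) for all y. Viewing γ_k = ∑_x h(ω_{k,x}) θ_{k,x} as a function of the step-k environment values (ω_{k,x})_{x∈Z^d}, there is a constant C depending only on sup_{a<x<b}|h| and sup_{a<x<b}|h'| such that ∑_{x∈Z^d} (∂γ_k/∂ω_{k,x})² ≤ C β² α_k, where in fact ∂γ_k/∂ω_{k,x} = h'(ω_{k,x}) θ_{k,x} + β h(ω_{k,x}) θ_{k,x} − β θ_{k,x} ∑_y h(ω_{k,y}) θ_{k,y}. -/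

import Mathlib

open MeasureTheory ProbabilityTheory Set

noncomputable section

/-- A nearest-neighbor path of length `n` in `ℤ^d` starting from the origin: `toFun 0` is the
origin, and consecutive vertices are nearest neighbors in `ℤ^d`. The vertices of the path (as in
the paper, which omits the starting point) are `toFun 1, …, toFun n`. -/
structure PolymerPath (d n : ℕ) where
  toFun : Fin (n + 1) → Fin d → ℤ
  start_eq : toFun 0 = 0
  adj : ∀ k : Fin n, (∑ i, |toFun k.succ i - toFun k.castSucc i|) = 1

/-- The `k`-th vertex `x_k` of a path, for `k = 1, …, n` (indexed by `Fin n`). -/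
def PolymerPath.vertex {d n : ℕ} (p : PolymerPath d n) (k : Fin n) : Fin d → ℤ :=
  p.toFun k.succ

/-- The overlap `|p ∩ q|`, i.e. the number of indices `k ∈ {1, …, n}` with `x_k = x_k'`. -/
def overlap {d n : ℕ} (p q : PolymerPath d n) : ℕ :=
  (Finset.univ.filter fun k : Fin n => p.vertex k = q.vertex k).card

/-- The energy `∑_{k=1}^n ω_{k, x_k}` of a path `p` in the environment `env`
(here `env k x` is `ω_{k+1, x}`, i.e. steps are indexed by `Fin n`). -/
def energy {d n : ℕ} (env : Fin n → (Fin d → ℤ) → ℝ) (p : PolymerPath d n) : ℝ :=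
  ∑ k : Fin n, env k (p.vertex k)

/-- The Gibbs weight `exp(β ∑_k ω_{k,x_k})` of a path. -/
def pathWeight {d n : ℕ} (β : ℝ) (env : Fin n → (Fin d → ℤ) → ℝ) (p : PolymerPath d n) : ℝ :=
  Real.exp (β * energy env p)

/-- The partition function `Z = ∑_{p ∈ 𝒫_n} exp(β ∑_k ω_{k,x_k})`. -/
def partitionZ (d n : ℕ) (β : ℝ) (env : Fin n → (Fin d → ℤ) → ℝ) : ℝ :=
  ∑' p : PolymerPath d n, pathWeight β env p

/-- The Gibbs (polymer) measure of a single path. -/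
def gibbsProb {d n : ℕ} (β : ℝ) (env : Fin n → (Fin d → ℤ) → ℝ) (p : PolymerPath d n) : ℝ :=
  pathWeight β env p / partitionZ d n β env

/-- `θ_{k,x}`: the Gibbs probability that the path visits `x` at step `k`
(`k : Fin n` represents step `k+1`). -/
def theta {d n : ℕ} (β : ℝ) (env : Fin n → (Fin d → ℤ) → ℝ) (k : Fin n) (x : Fin d → ℤ) : ℝ :=
  ∑' p : PolymerPath d n, if p.vertex k = x then gibbsProb β env p else 0

/-- `α_k = ∑_{x ∈ ℤ^d} θ_{k,x}²`. -/
def alphaOf {d n : ℕ} (β : ℝ) (env : Fin n → (Fin d → ℤ) → ℝ) (k : Fin n) : ℝ :=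
  ∑' x : Fin d → ℤ, (theta β env k x) ^ 2

/-- The environment obtained from `env` by replacing the value `ω_{k,x}` by `t`. -/
def envUpd {d n : ℕ} (env : Fin n → (Fin d → ℤ) → ℝ) (k : Fin n) (x : Fin d → ℤ) (t : ℝ) :
    Fin n → (Fin d → ℤ) → ℝ :=
  fun j y => if j = k ∧ y = x then t else env j y

/-- `γ_k = ∑_x h(ω_{k,x}) θ_{k,x}`. -/
def gammaOf {d n : ℕ} (h : ℝ → ℝ) (β : ℝ) (env : Fin n → (Fin d → ℤ) → ℝ) (k : Fin n) : ℝ :=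
  ∑' x : Fin d → ℤ, h (env k x) * theta β env k x


/-! The Gibbs measure lives on the finitely many nearest-neighbour paths of length `n`, so `θ_{k,x}`
and `γ_k` are ratios `N / Z` of finite sums of path weights. Moving `ω_{k,x}` to `s` multiplies the
weight of exactly the paths through `x` at step `k` by `exp (β (s - ω_{k,x}))`, and the quotient
rule gives the derivative formula. The derivative factors as `θ_{k,x} (h' + β h - β γ_k)`; since
`γ_k` is a Gibbs average of values of `h`, `|γ_k| ≤ sup |h|`, so for `β ≥ 1` the bracket is at most
`β (sup |h'| + 2 sup |h|)` and summing squares over `x` gives `C β² α_k`. -/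

namespace PolymerPath

variable {d n : ℕ}

theorem sum_abs_toFun_le (p : PolymerPath d n) (j : Fin (n + 1)) :
    ∑ i, |p.toFun j i| ≤ j := by
  induction j using Fin.induction with
  | zero => simp [p.start_eq]
  | succ j ih =>
    calc ∑ i, |p.toFun j.succ i|
        ≤ ∑ i, (|p.toFun j.succ i - p.toFun j.castSucc i| + |p.toFun j.castSucc i|) :=
          Finset.sum_le_sum fun i _ => sub_le_iff_le_add.mp (abs_sub_abs_le_abs_sub _ _)
      _ ≤ 1 + j.castSucc := by rw [Finset.sum_add_distrib, p.adj j]; exact add_le_add_right ih 1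
      _ = j.succ := by simp [add_comm]

theorem abs_toFun_le (p : PolymerPath d n) (j : Fin (n + 1)) (i : Fin d) :
    |p.toFun j i| ≤ n :=
  calc |p.toFun j i| ≤ ∑ i, |p.toFun j i| :=
        Finset.single_le_sum (f := fun i => |p.toFun j i|) (fun _ _ => abs_nonneg _)
          (Finset.mem_univ i)
    _ ≤ j := p.sum_abs_toFun_le j
    _ ≤ n := by exact_mod_cast Nat.lt_succ_iff.mp j.isLt

theorem toFun_injective : Function.Injective (toFun : PolymerPath d n → _) := by
  rintro ⟨_, _, _⟩ ⟨_, _, _⟩ rfl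
  rfl

instance : Finite (PolymerPath d n) :=
  Finite.of_injective
    (fun p j i => (⟨p.toFun j i, Set.mem_Icc.mpr (abs_le.mp (p.abs_toFun_le j i))⟩ :
      Set.Icc (-(n : ℤ)) n))
    fun _ _ hpq => toFun_injective <| funext₂ fun j i => congrArg Subtype.val (congrFun₂ hpq j i)

theorem nonempty (hd : 0 < d) : Nonempty (PolymerPath d n) := by
  classical
  refine ⟨⟨fun j => Pi.single ⟨0, hd⟩ (j : ℤ), by simp, fun j => ?_⟩⟩
  simp only [← Pi.sub_apply, ← Pi.single_sub, Fin.val_succ, Fin.val_castSucc]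
  simp [Pi.apply_single (fun _ => abs) (fun _ => abs_zero)]

end PolymerPath

theorem pathWeight_pos {d n : ℕ} (β : ℝ) (env : Fin n → (Fin d → ℤ) → ℝ) (p : PolymerPath d n) :
    0 < pathWeight β env p :=
  Real.exp_pos _

section FiniteVolume

variable {d n : ℕ} [Fintype (PolymerPath d n)] (β : ℝ) (env : Fin n → (Fin d → ℤ) → ℝ) (k : Fin n)

theorem partitionZ_eq_sum : partitionZ d n β env = ∑ p, pathWeight β env p :=
  tsum_fintype _

theorem partitionZ_pos [Nonempty (PolymerPath d n)] : 0 < partitionZ d n β env := by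
  rw [partitionZ_eq_sum]
  exact Finset.sum_pos (fun p _ => pathWeight_pos β env p) Finset.univ_nonempty

theorem theta_eq (x : Fin d → ℤ) :
    theta β env k x = (∑ p with p.vertex k = x, pathWeight β env p) / partitionZ d n β env := by
  rw [theta, tsum_fintype, Finset.sum_filter, Finset.sum_div]
  simp only [gibbsProb, ite_div, zero_div]

theorem support_theta_subset :
    Function.support (theta β env k) ⊆ Set.range (PolymerPath.vertex · k) := by
  refine Function.support_subset_iff'.mpr fun x hx => ?_
  rw [theta_eq, Finset.filter_false_of_mem fun p _ hp => hx ⟨p, hp⟩, Finset.sum_empty, zero_div]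

theorem gammaOf_eq (h : ℝ → ℝ) :
    gammaOf h β env k =
      (∑ p, h (env k (p.vertex k)) * pathWeight β env p) / partitionZ d n β env := by
  classical
  have hsplit : ∀ x, h (env k x) * theta β env k x =
      ∑ p, if x = p.vertex k then h (env k (p.vertex k)) * gibbsProb β env p else 0 := by
    intro x
    rw [theta, tsum_fintype, Finset.mul_sum]
    refine Finset.sum_congr rfl fun p _ => ?_
    by_cases hp : x = p.vertex k
    · simp [hp]
    · simp [hp, Ne.symm hp]
  rw [gammaOf, tsum_congr hsplit, Summable.tsum_finsetSum fun p _ => (hasSum_ite_eq _ _).summable,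
    Finset.sum_div]
  exact Finset.sum_congr rfl fun p _ => by rw [tsum_ite_eq, gibbsProb, mul_div_assoc]

theorem abs_gammaOf_le [Nonempty (PolymerPath d n)] {h : ℝ → ℝ} {K : ℝ}
    (hK : ∀ y, |h (env k y)| ≤ K) : |gammaOf h β env k| ≤ K := by
  have hZ := partitionZ_pos β env
  rw [gammaOf_eq, abs_div, abs_of_pos hZ, div_le_iff₀ hZ, partitionZ_eq_sum, Finset.mul_sum]
  refine (Finset.abs_sum_le_sum_abs _ _).trans (Finset.sum_le_sum fun p _ => ?_)
  rw [abs_mul, abs_of_pos (pathWeight_pos β env p)]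
  exact mul_le_mul_of_nonneg_right (hK _) (pathWeight_pos β env p).le

end FiniteVolume

section Perturbation

variable {d n : ℕ} (β : ℝ) (env : Fin n → (Fin d → ℤ) → ℝ) (k : Fin n) (x : Fin d → ℤ)

theorem envUpd_self : envUpd env k x (env k x) = env := by
  funext j y
  unfold envUpd
  split_ifs with h
  · rw [h.1, h.2]
  · rfl

theorem envUpd_apply_vertex (s : ℝ) (p : PolymerPath d n) :
    envUpd env k x s k (p.vertex k) = if p.vertex k = x then s else env k (p.vertex k) := by
  simp [envUpd]

theorem hasDerivAt_energy_envUpd (p : PolymerPath d n) (s : ℝ) :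
    HasDerivAt (fun t => energy (envUpd env k x t) p) (if p.vertex k = x then 1 else 0) s := by
  classical
  have hterm : ∀ j ∈ Finset.univ, HasDerivAt (fun t => envUpd env k x t j (p.vertex j))
      (if j = k ∧ p.vertex j = x then 1 else 0) s := by
    intro j _
    unfold envUpd
    split_ifs
    · exact hasDerivAt_id s
    · exact hasDerivAt_const s _
  refine (HasDerivAt.fun_sum hterm).congr_deriv ?_
  simp [ite_and]

theorem hasDerivAt_pathWeight_envUpd (p : PolymerPath d n) :
    HasDerivAt (fun t => pathWeight β (envUpd env k x t) p)
      (if p.vertex k = x then β * pathWeight β env p else 0) (env k x) := by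
  refine (((hasDerivAt_energy_envUpd env k x p _).const_mul β).exp).congr_deriv ?_
  rw [envUpd_self]
  split_ifs <;> simp [pathWeight, mul_comm]

variable [Fintype (PolymerPath d n)]

theorem hasDerivAt_partitionZ_envUpd :
    HasDerivAt (fun t => partitionZ d n β (envUpd env k x t))
      (β * ∑ p with p.vertex k = x, pathWeight β env p) (env k x) := by
  simp only [partitionZ_eq_sum]
  refine (HasDerivAt.fun_sum fun p _ => hasDerivAt_pathWeight_envUpd β env k x p).congr_deriv ?_
  rw [Finset.sum_filter, Finset.mul_sum]
  simp only [mul_ite, mul_zero]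

theorem hasDerivAt_sum_mul_pathWeight_envUpd {h : ℝ → ℝ} {h'x : ℝ}
    (hh : HasDerivAt h h'x (env k x)) :
    HasDerivAt
      (fun t => ∑ p, h (envUpd env k x t k (p.vertex k)) * pathWeight β (envUpd env k x t) p)
      ((h'x + β * h (env k x)) * ∑ p with p.vertex k = x, pathWeight β env p) (env k x) := by
  have hterm : ∀ p : PolymerPath d n, HasDerivAt (fun t => h (envUpd env k x t k (p.vertex k)))
      (if p.vertex k = x then h'x else 0) (env k x) := by
    intro p
    simp only [envUpd_apply_vertex]
    split_ifs
    · exact hh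
    · exact hasDerivAt_const _ _
  refine (HasDerivAt.fun_sum fun p _ =>
    (hterm p).mul (hasDerivAt_pathWeight_envUpd β env k x p)).congr_deriv ?_
  rw [Finset.sum_filter, Finset.mul_sum, envUpd_self]
  refine Finset.sum_congr rfl fun p _ => ?_
  split_ifs with hp
  · rw [hp]; ring
  · ring

theorem hasDerivAt_gammaOf_envUpd [Nonempty (PolymerPath d n)] {h : ℝ → ℝ} {h'x : ℝ}
    (hh : HasDerivAt h h'x (env k x)) :
    HasDerivAt (fun t => gammaOf h β (envUpd env k x t) k)
      (h'x * theta β env k x + β * h (env k x) * theta β env k x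
        - β * theta β env k x * gammaOf h β env k) (env k x) := by
  simp only [gammaOf_eq]
  have hZ := partitionZ_pos β env
  refine ((hasDerivAt_sum_mul_pathWeight_envUpd β env k x hh).div
    (hasDerivAt_partitionZ_envUpd β env k x) (by rw [envUpd_self]; exact hZ.ne')).congr_deriv ?_
  rw [envUpd_self, theta_eq]
  field_simp

end Perturbation

theorem sq_add_mul_sub_mul_le {u v w θ K K' β : ℝ} (hu : |u| ≤ K') (hv : |v| ≤ K) (hw : |w| ≤ K)
    (hβ : 1 ≤ β) :
    (u * θ + β * v * θ - β * θ * w) ^ 2 ≤ ((K' + 2 * K) ^ 2 + 1) * β ^ 2 * θ ^ 2 := by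
  have hc : |u + β * v - β * w| ≤ β * (K' + 2 * K) := by
    rw [abs_le] at *
    constructor <;> nlinarith
  calc (u * θ + β * v * θ - β * θ * w) ^ 2 = (u + β * v - β * w) ^ 2 * θ ^ 2 := by ring
    _ ≤ (β * (K' + 2 * K)) ^ 2 * θ ^ 2 :=
        mul_le_mul_of_nonneg_right (sq_le_sq' (abs_le.mp hc).1 (abs_le.mp hc).2) (sq_nonneg θ)
    _ ≤ ((K' + 2 * K) ^ 2 + 1) * β ^ 2 * θ ^ 2 := by
        nlinarith [mul_nonneg (sq_nonneg β) (sq_nonneg θ)]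

theorem tsum_sq_le_mul_tsum_sq {ι : Type*} {f g : ι → ℝ} {C : ℝ}
    (hg : (Function.support g).Finite) (hfg : ∀ i, f i ^ 2 ≤ C * g i ^ 2) :
    ∑' i, f i ^ 2 ≤ C * ∑' i, g i ^ 2 := by
  have hg2 : (Function.support fun i => g i ^ 2).Finite :=
    hg.subset (Function.support_subset_iff'.mpr fun i hi => by simp [Function.notMem_support.mp hi])
  have hf2 : (Function.support fun i => f i ^ 2).Finite := by
    refine hg.subset (Function.support_subset_iff'.mpr fun i hi => ?_)
    have := hfg i
    rw [Function.notMem_support.mp hi] at this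
    exact le_antisymm (by simpa using this) (sq_nonneg _)
  rw [← tsum_mul_left]
  exact Summable.tsum_le_tsum hfg (summable_of_hasFiniteSupport hf2)
    ((summable_of_hasFiniteSupport hg2).mul_left C)

/-- viewing `γ_k` as a function of the step-`k` environment values, its
partial derivative in `ω_{k,x}` equals
`h'(ω_{k,x}) θ_{k,x} + β h(ω_{k,x}) θ_{k,x} − β θ_{k,x} ∑_y h(ω_{k,y}) θ_{k,y}`, and there is a
constant `C > 0`, depending only on the bounds `K ≥ sup|h|` and `K' ≥ sup|h'|`, such that
`∑_x (∂γ_k/∂ω_{k,x})² ≤ C β² α_k`. -/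
theorem gamma_deriv_formula_and_sq_sum_le (K K' : ℝ) :
    ∃ C : ℝ, 0 < C ∧
      ∀ (d n : ℕ), 1 ≤ d → 1 ≤ n → ∀ (a b : ℝ), a < b →
      ∀ (h h' : ℝ → ℝ),
        (∀ x ∈ Set.Ioo a b, HasDerivAt h (h' x) x) →
        (∀ x ∈ Set.Ioo a b, |h x| ≤ K) →
        (∀ x ∈ Set.Ioo a b, |h' x| ≤ K') →
      ∀ (β : ℝ), 1 ≤ β →
      ∀ (env : Fin n → (Fin d → ℤ) → ℝ) (k : Fin n),
        (∀ y : Fin d → ℤ, env k y ∈ Set.Ioo a b) →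
        (∀ x : Fin d → ℤ,
          HasDerivAt (fun s => gammaOf h β (envUpd env k x s) k)
            (h' (env k x) * theta β env k x + β * h (env k x) * theta β env k x
              - β * theta β env k x * ∑' y : Fin d → ℤ, h (env k y) * theta β env k y)
            (env k x)) ∧
        (∑' x : Fin d → ℤ,
            (h' (env k x) * theta β env k x + β * h (env k x) * theta β env k x
              - β * theta β env k x * ∑' y : Fin d → ℤ, h (env k y) * theta β env k y) ^ 2)
          ≤ C * β ^ 2 * alphaOf β env k := by
  refine ⟨(K' + 2 * K) ^ 2 + 1, by positivity, ?_⟩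
  intro d n hd _ a b _ h h' hh hK hK' β hβ env k henv
  have := Fintype.ofFinite (PolymerPath d n)
  have := PolymerPath.nonempty (n := n) hd
  have hγ : |gammaOf h β env k| ≤ K := abs_gammaOf_le β env k fun y => hK _ (henv y)
  exact ⟨fun x => hasDerivAt_gammaOf_envUpd β env k x (hh _ (henv x)),
    tsum_sq_le_mul_tsum_sq ((Set.finite_range _).subset (support_theta_subset β env k))
      fun x => sq_add_mul_sub_mul_le (hK' _ (henv x)) (hK _ (henv x)) hγ hβ⟩

end
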